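/- If a unification problem P is in normal form with respect to the unification rules and is not ⊥, then P is a solved form: it is a set of equations x=s with pairwise distinct left-hand side variables, partitioned into x̄=ū with Var(ū) contained in the parameters, and cyclic equations ȳ=v̄ where each v is a non-variable term with Var(v) ⊆ parameters ∪ ȳ and Var(v)∩ȳ ≠ ∅. -/

import Mathlib

/-- Finite first-order terms. -/
inductive Tm (F V : Type) : Type
  | var : V → Tm F V
  | app : F → List (Tm F V) → Tm F V

namespace Tm
variable {F V W : Type}

/-- Application of a substitution to a term. -/
def subst (σ : V → Tm F W) : Tm F V → Tm F W
  | .var x => σ x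
  | .app f l => .app f (l.attach.map fun t => t.1.subst σ)
  decreasing_by simp only [Tm.app.sizeOf_spec]; have := List.sizeOf_lt_of_mem t.2; omega

/-- Size of a term (variables have size 0). -/
def size : Tm F V → ℕ
  | .var _ => 0
  | .app _ l => 1 + (l.attach.map fun t => t.1.size).sum
  decreasing_by simp only [Tm.app.sizeOf_spec]; have := List.sizeOf_lt_of_mem t.2; omega

/-- `x` occurs in `t`. -/
inductive HasVar (x : V) : Tm F V → Prop
  | var : HasVar x (.var x)
  | app {f l t} : t ∈ l → HasVar x t → HasVar x (.app f l)

/-- `t` is not a variable. -/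
def NonVar (t : Tm F V) : Prop := ∀ z, t ≠ .var z

end Tm

section Unification

variable {F V : Type} [DecidableEq V]

/-- An equation is an oriented pair of terms; a unification problem is a finite
multiset of equations. -/
abbrev Eqn (F V : Type) := Tm F V × Tm F V

/-- The substitution `{x ↦ s}`. -/
def single (x : V) (s : Tm F V) : V → Tm F V := fun z => if z = x then s else .var z

/-- Apply `{x ↦ s}` to every term of a problem. -/
def substProb (x : V) (s : Tm F V) (P : Multiset (Eqn F V)) : Multiset (Eqn F V) :=
  P.map fun e => (e.1.subst (single x s), e.2.subst (single x s))

/-- `x` occurs in the problem `P`. -/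
def VarInProb (x : V) (P : Multiset (Eqn F V)) : Prop :=
  ∃ e ∈ P, Tm.HasVar x e.1 ∨ Tm.HasVar x e.2

/-- The unification rules Remove, Decomp, Conflict, Choose, Coalesce, Swap,
Merge, Replace (all rules except Merep); `none` stands for `⊥`. -/
inductive UStep1 : Multiset (Eqn F V) → Option (Multiset (Eqn F V)) → Prop
  | remove (s P) : UStep1 ((s, s) ::ₘ P) (some P)
  | decomp (f ss ts P) : ss.length = ts.length →
      UStep1 ((.app f ss, .app f ts) ::ₘ P) (some ((ss.zip ts : List (Eqn F V)) + P))
  | conflict (f g ss ts P) : f ≠ g ∨ ss.length ≠ ts.length →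
      UStep1 ((.app f ss, .app g ts) ::ₘ P) none
  | choose (x y P) : ¬ VarInProb x P → VarInProb y P →
      UStep1 ((.var y, .var x) ::ₘ P) (some ((.var x, .var y) ::ₘ P))
  | coalesce (x y P) : x ≠ y → VarInProb x P → VarInProb y P →
      UStep1 ((.var x, .var y) ::ₘ P) (some ((.var x, .var y) ::ₘ substProb x (.var y) P))
  | swap (u x P) : u.NonVar → UStep1 ((u, .var x) ::ₘ P) (some ((.var x, u) ::ₘ P))
  | merge (x s t P) : 0 < s.size → s.size ≤ t.size →
      UStep1 ((.var x, s) ::ₘ (.var x, t) ::ₘ P)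
        (some ((.var x, s) ::ₘ (s, t) ::ₘ P))
  | replace (x s P) : ¬ Tm.HasVar x s → s.NonVar → VarInProb x P →
      UStep1 ((.var x, s) ::ₘ P) (some ((.var x, s) ::ₘ substProb x s P))

/-- The full set of unification rules: the rules above together with Merep,
which only applies when no other rule applies. -/
inductive UStep : Multiset (Eqn F V) → Option (Multiset (Eqn F V)) → Prop
  | base {P Q} : UStep1 P Q → UStep P Q
  | merep (x y s P) : Tm.HasVar x s → s.NonVar → ¬ Tm.HasVar y s → ¬ VarInProb y P →
      (∀ Q, ¬ UStep1 ((.var y, .var x) ::ₘ (.var x, s) ::ₘ P) Q) →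
      UStep ((.var y, .var x) ::ₘ (.var x, s) ::ₘ P)
        (some ((.var y, s) ::ₘ (.var x, s) ::ₘ P))

end Unification

variable {F V : Type} [DecidableEq V]

/-- `z` occurs as the left-hand side variable of some equation of `P`. -/
def IsLhsVar (P : Multiset (Eqn F V)) (z : V) : Prop := ∃ s, (Tm.var z, s) ∈ P

/-- The parameters of `P` are the variables of `P` that are not left-hand side
variables of equations of `P`. -/
def IsParam (P : Multiset (Eqn F V)) (z : V) : Prop := VarInProb z P ∧ ¬ IsLhsVar P z

/-- Solved forms: a set of equations `x = s` with pairwise distinct left-hand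
side variables, partitioned into a finite part `x̄ = ū` with `Var(ū)` contained
in the parameters, and a cyclic part `ȳ = v̄` where each `v` is a non-variable
term with `Var(v) ⊆ parameters ∪ ȳ` and `Var(v) ∩ ȳ ≠ ∅`. -/
def SolvedForm (P : Multiset (Eqn F V)) : Prop :=
  (∀ e ∈ P, ∃ x s, e = (Tm.var x, s)) ∧
  (P.map Prod.fst).Nodup ∧
  ∃ X Y : Multiset (Eqn F V), P = X + Y ∧
    (∀ e ∈ X, ∀ z, Tm.HasVar z e.2 → IsParam P z) ∧
    (∀ e ∈ Y, e.2.NonVar ∧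
      (∀ z, Tm.HasVar z e.2 → IsParam P z ∨ IsLhsVar Y z) ∧
      (∃ z, Tm.HasVar z e.2 ∧ IsLhsVar Y z))

lemma size_zero_var {t : Tm F V} (h : t.size = 0) : ∃ y, t = Tm.var y := by
  cases t with
  | var y => exact ⟨y, rfl⟩
  | app f l => rw [Tm.size] at h; omega

lemma not_nonvar {t : Tm F V} (h : ¬ t.NonVar) : ∃ y, t = Tm.var y := by
  cases t with
  | var y => exact ⟨y, rfl⟩
  | app f l => exact absurd (show (Tm.app f l).NonVar from fun z hz => by cases hz) h

lemma hasVar_var {z y : V} (h : Tm.HasVar z (Tm.var y : Tm F V)) : z = y := by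
  cases h; rfl

/-- Every equation of a normal form has the shape `x = s` with `s ≠ x`. -/
lemma nf_shape (P : Multiset (Eqn F V)) (hnf1 : ∀ Q, ¬ UStep1 P Q) :
    ∀ e ∈ P, ∃ x s, e = (Tm.var x, s) ∧ s ≠ Tm.var x := by
  classical
  intro e he
  obtain ⟨u, t⟩ := e
  have hP : P = (u, t) ::ₘ P.erase (u, t) := (Multiset.cons_erase he).symm
  cases u with
  | var x =>
    refine ⟨x, t, rfl, ?_⟩
    rintro rfl
    exact hnf1 _ (by rw [hP]; exact UStep1.remove (Tm.var x) _)
  | app f ss =>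
    cases t with
    | var y =>
      have hstep : UStep1 ((Tm.app f ss, Tm.var y) ::ₘ P.erase (Tm.app f ss, Tm.var y))
          (some ((Tm.var y, Tm.app f ss) ::ₘ P.erase (Tm.app f ss, Tm.var y))) :=
        UStep1.swap (Tm.app f ss) y _ (fun z hz => by cases hz)
      exact absurd (by rw [hP]; exact hstep) (hnf1 _)
    | app g ts =>
      by_cases hfg : f = g
      · by_cases hlen : ss.length = ts.length
        · subst hfg
          exact absurd (by rw [hP]; exact UStep1.decomp f ss ts _ hlen) (hnf1 _)
        · exact absurd (by rw [hP]; exact UStep1.conflict f g ss ts _ (Or.inr hlen)) (hnf1 _)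
      · exact absurd (by rw [hP]; exact UStep1.conflict f g ss ts _ (Or.inl hfg)) (hnf1 _)

/-- If `x = y` is an equation of a normal form, `x` occurs nowhere else. -/
lemma nf_lhs_unique (P : Multiset (Eqn F V)) (hnf1 : ∀ Q, ¬ UStep1 P Q)
    (x y : V) (R : Multiset (Eqn F V)) (hP : P = (Tm.var x, Tm.var y) ::ₘ R) :
    ¬ VarInProb x R := by
  classical
  intro hx
  by_cases hxy : x = y
  · subst hxy; exact hnf1 _ (by rw [hP]; exact UStep1.remove _ _)
  · by_cases hy : VarInProb y R
    · exact hnf1 _ (by rw [hP]; exact UStep1.coalesce x y R hxy hx hy)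
    · exact hnf1 _ (by rw [hP]; exact UStep1.choose y x R hy hx)

/-- Left-hand side variables of a normal form are pairwise distinct. -/
lemma nf_no_dup (P : Multiset (Eqn F V)) (hnf1 : ∀ Q, ¬ UStep1 P Q) :
    ∀ x s t (R : Multiset (Eqn F V)),
      P = (Tm.var x, s) ::ₘ (Tm.var x, t) ::ₘ R → False := by
  classical
  suffices h : ∀ x (s t : Tm F V) (R : Multiset (Eqn F V)), s.size ≤ t.size →
      P = (Tm.var x, s) ::ₘ (Tm.var x, t) ::ₘ R → False by
    intro x s t R hP
    rcases le_total s.size t.size with hle | hle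
    · exact h x s t R hle hP
    · exact h x t s R hle (by rw [hP, Multiset.cons_swap])
  intro x s t R hle hP
  rcases Nat.eq_zero_or_pos s.size with h0 | h0
  · obtain ⟨y, rfl⟩ := size_zero_var h0
    exact nf_lhs_unique P hnf1 x y ((Tm.var x, t) ::ₘ R) hP
      ⟨(Tm.var x, t), Multiset.mem_cons_self _ _, Or.inl Tm.HasVar.var⟩
  · exact hnf1 _ (by rw [hP]; exact UStep1.merge x s t R h0 hle)

/-- A variable right-hand side of a normal form is a parameter. -/
lemma nf_var_rhs_param (P : Multiset (Eqn F V)) (hnf : ∀ Q, ¬ UStep P Q)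
    (x y : V) (R : Multiset (Eqn F V)) (hP : P = (Tm.var x, Tm.var y) ::ₘ R) :
    IsParam P y := by
  classical
  have hnf1 : ∀ Q, ¬ UStep1 P Q := fun Q h => hnf Q (UStep.base h)
  have hx : ¬ VarInProb x R := nf_lhs_unique P hnf1 x y R hP
  refine ⟨⟨(Tm.var x, Tm.var y), by rw [hP]; exact Multiset.mem_cons_self _ _,
    Or.inr Tm.HasVar.var⟩, ?_⟩
  rintro ⟨t, ht⟩
  have hxy : x ≠ y := by
    rintro rfl; exact hnf1 _ (by rw [hP]; exact UStep1.remove _ _)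
  have htR : (Tm.var y, t) ∈ R := by
    rw [hP] at ht
    rcases Multiset.mem_cons.mp ht with heq | h
    · have h1 : (Tm.var y : Tm F V) = Tm.var x := congrArg Prod.fst heq
      injection h1 with h2
      exact absurd h2.symm hxy
    · exact h
  obtain ⟨R', hR⟩ : ∃ R', R = (Tm.var y, t) ::ₘ R' := ⟨_, (Multiset.cons_erase htR).symm⟩
  have hP2 : P = (Tm.var x, Tm.var y) ::ₘ (Tm.var y, t) ::ₘ R' := by rw [hP, hR]
  by_cases hnv : t.NonVar
  · by_cases hyt : Tm.HasVar y t
    · have hxt : ¬ Tm.HasVar x t := fun hxt => hx ⟨(Tm.var y, t), htR, Or.inr hxt⟩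
      have hxR' : ¬ VarInProb x R' := by
        rintro ⟨e, he, h⟩
        exact hx ⟨e, by rw [hR]; exact Multiset.mem_cons_of_mem he, h⟩
      have hno : ∀ Q, ¬ UStep1 ((Tm.var x, Tm.var y) ::ₘ (Tm.var y, t) ::ₘ R') Q :=
        fun Q hQ => hnf1 Q (by rw [hP2]; exact hQ)
      have hstep := UStep.merep y x t R' hyt hnv hxt hxR' hno
      exact hnf _ (by rw [hP2]; exact hstep)
    · have hyR : VarInProb y ((Tm.var x, Tm.var y) ::ₘ R') :=
        ⟨(Tm.var x, Tm.var y), Multiset.mem_cons_self _ _, Or.inr Tm.HasVar.var⟩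
      have hstep := UStep1.replace y t ((Tm.var x, Tm.var y) ::ₘ R') hyt hnv hyR
      exact hnf1 _ (by rw [hP2, Multiset.cons_swap]; exact hstep)
  · obtain ⟨w, rfl⟩ := not_nonvar hnv
    exact nf_lhs_unique P hnf1 y w ((Tm.var x, Tm.var y) ::ₘ R')
      (by rw [hP2, Multiset.cons_swap])
      ⟨(Tm.var x, Tm.var y), Multiset.mem_cons_self _ _, Or.inr Tm.HasVar.var⟩

/-- In a normal form, a non-parameter variable occurring in a right-hand side
is the left-hand side of a cyclic equation. -/
lemma nf_cyclic (P : Multiset (Eqn F V)) (hnf1 : ∀ Q, ¬ UStep1 P Q)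
    (x : V) (s : Tm F V) (R : Multiset (Eqn F V)) (z : V)
    (hP : P = (Tm.var x, s) ::ₘ R) (hz : Tm.HasVar z s) (hnp : ¬ IsParam P z) :
    ∃ t, (Tm.var z, t) ∈ P ∧ Tm.HasVar z t := by
  classical
  have hzP : VarInProb z P :=
    ⟨(Tm.var x, s), by rw [hP]; exact Multiset.mem_cons_self _ _, Or.inr hz⟩
  have hlhs : IsLhsVar P z := by by_contra h; exact hnp ⟨hzP, h⟩
  obtain ⟨t, ht⟩ := hlhs
  by_cases heq : ((Tm.var z, t) : Eqn F V) = (Tm.var x, s)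
  · refine ⟨t, ht, ?_⟩
    have h1 : (Tm.var z : Tm F V) = Tm.var x := congrArg Prod.fst heq
    have h2 : t = s := congrArg Prod.snd heq
    injection h1 with h1
    subst h1; subst h2; exact hz
  · have htR : (Tm.var z, t) ∈ R := by
      rw [hP] at ht
      exact (Multiset.mem_cons.mp ht).resolve_left heq
    obtain ⟨R', hR⟩ : ∃ R', R = (Tm.var z, t) ::ₘ R' := ⟨_, (Multiset.cons_erase htR).symm⟩
    have hP2 : P = (Tm.var z, t) ::ₘ (Tm.var x, s) ::ₘ R' := by
      rw [hP, hR, Multiset.cons_swap]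
    by_cases hnv : t.NonVar
    · by_cases hzt : Tm.HasVar z t
      · exact ⟨t, ht, hzt⟩
      · have hzR : VarInProb z ((Tm.var x, s) ::ₘ R') :=
          ⟨(Tm.var x, s), Multiset.mem_cons_self _ _, Or.inr hz⟩
        have hstep := UStep1.replace z t ((Tm.var x, s) ::ₘ R') hzt hnv hzR
        exact absurd (by rw [hP2]; exact hstep) (hnf1 _)
    · obtain ⟨w, rfl⟩ := not_nonvar hnv
      exact absurd ⟨(Tm.var x, s), Multiset.mem_cons_self _ _, Or.inr hz⟩
        (nf_lhs_unique P hnf1 z w _ hP2)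

/-- a unification problem in normal form with respect to the
unification rules (which is not `⊥`) is a solved form. -/
theorem normal_form_is_solved_form (P : Multiset (Eqn F V))
    (hnf : ∀ Q, ¬ UStep P Q) : SolvedForm P := by
  classical
  have hnf1 : ∀ Q, ¬ UStep1 P Q := fun Q h => hnf Q (UStep.base h)
  have shape := nf_shape P hnf1
  refine ⟨fun e he => by obtain ⟨x, s, h, -⟩ := shape e he; exact ⟨x, s, h⟩, ?_, ?_⟩
  · -- Nodup of lhs
    by_contra hnd
    rw [Multiset.nodup_iff_count_le_one] at hnd
    push_neg at hnd
    obtain ⟨a, ha⟩ := hnd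
    have haP : a ∈ P.map Prod.fst := Multiset.count_pos.mp (by omega)
    obtain ⟨e₁, he₁, rfl⟩ := Multiset.mem_map.mp haP
    have hP1 : P = e₁ ::ₘ P.erase e₁ := (Multiset.cons_erase he₁).symm
    have hmem2 : e₁.1 ∈ (P.erase e₁).map Prod.fst := by
      have hc : Multiset.count e₁.1 (P.map Prod.fst)
          = Multiset.count e₁.1 (e₁.1 ::ₘ (P.erase e₁).map Prod.fst) := by
        rw [← Multiset.map_cons, ← hP1]
      rw [hc, Multiset.count_cons_self] at ha
      exact Multiset.count_pos.mp (by omega)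
    obtain ⟨e₂, he₂, hfe⟩ := Multiset.mem_map.mp hmem2
    obtain ⟨x, s, he1eq, hne1⟩ := shape e₁ he₁
    obtain ⟨x', t, he2eq, hne2⟩ := shape e₂ (Multiset.mem_of_mem_erase he₂)
    subst he1eq; subst he2eq
    have hfe' : (Tm.var x' : Tm F V) = Tm.var x := hfe
    injection hfe' with hx'
    subst hx'
    have hP2 : P = (Tm.var x', s) ::ₘ (Tm.var x', t) ::ₘ
        ((P.erase (Tm.var x', s)).erase (Tm.var x', t)) := by
      conv_lhs => rw [hP1]
      congr 1
      exact (Multiset.cons_erase he₂).symm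
    exact nf_no_dup P hnf1 x' s t _ hP2
  · -- the partition
    set pred : Eqn F V → Prop :=
      fun e => ∃ z, Tm.HasVar z e.2 ∧ ∃ t, (Tm.var z, t) ∈ P ∧ Tm.HasVar z t with hpred
    refine ⟨P.filter (fun e => ¬ pred e), P.filter pred, ?_, ?_, ?_⟩
    · rw [add_comm, Multiset.filter_add_not]
    · intro e heX z hz
      have heP : e ∈ P := Multiset.mem_of_mem_filter heX
      have hnp : ¬ pred e := (Multiset.mem_filter.mp heX).2
      obtain ⟨x, s, rfl, hne⟩ := shape e heP
      by_cases hnv : s.NonVar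
      · by_contra hzp
        obtain ⟨t, ht, hzt⟩ := nf_cyclic P hnf1 x s _ z
          (Multiset.cons_erase heP).symm hz hzp
        exact hnp ⟨z, hz, t, ht, hzt⟩
      · obtain ⟨w, rfl⟩ := not_nonvar hnv
        obtain rfl := hasVar_var hz
        exact nf_var_rhs_param P hnf x z _ (Multiset.cons_erase heP).symm
    · intro e heY
      have heP : e ∈ P := Multiset.mem_of_mem_filter heY
      have hp : pred e := (Multiset.mem_filter.mp heY).2
      obtain ⟨x, s, rfl, hne⟩ := shape e heP
      have hnv : s.NonVar := by
        by_contra h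
        obtain ⟨w, rfl⟩ := not_nonvar h
        obtain ⟨z, hz, t, ht, hzt⟩ := hp
        obtain rfl := hasVar_var hz
        exact (nf_var_rhs_param P hnf x z _ (Multiset.cons_erase heP).symm).2 ⟨t, ht⟩
      refine ⟨hnv, ?_, ?_⟩
      · intro z hz
        by_cases hzp : IsParam P z
        · exact Or.inl hzp
        · obtain ⟨t, ht, hzt⟩ := nf_cyclic P hnf1 x s _ z
            (Multiset.cons_erase heP).symm hz hzp
          exact Or.inr ⟨t, Multiset.mem_filter.mpr ⟨ht, z, hzt, t, ht, hzt⟩⟩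
      · obtain ⟨z, hz, t, ht, hzt⟩ := hp
        exact ⟨z, hz, t, Multiset.mem_filter.mpr ⟨ht, z, hzt, t, ht, hzt⟩⟩
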